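/- arXiv:2201.08654 — 2 statements merged into one kernel-verified Lean document; each statement's English description precedes it below -/
import Mathlib

section
/- Let G be a finite group, let π be a unitary representation of G on a finite-dimensional complex Hilbert space H, and suppose η ∈ H does phase retrieval for π. Then for every nonzero f ∈ H, the set A = {x ∈ G : ⟨f, π(x)η⟩ ≠ 0} satisfies A · A⁻¹ = G, i.e. every g ∈ G can be written as g = a b⁻¹ with a, b ∈ A. -/
/-
If `g ∉ A A⁻¹`, then `f` and `π(g) f` have disjoint measurement supports (`A` and `gA`), so
`f + π(g) f` and `f - π(g) f` have the same measurements. Phase retrieval makes them equal up to a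
unimodular scalar, which a measurement where `f` is nonzero forces to be `1`; hence `π(g) f = 0`.
-/

def DoesPhaseRetrieval {H : Type*} [NormedAddCommGroup H] [InnerProductSpace ℂ H]
    {I : Type*} (x : I → H) : Prop :=
  ∀ f g : H, (∀ i : I, ‖(inner ℂ f (x i) : ℂ)‖ = ‖(inner ℂ g (x i) : ℂ)‖) →
    ∃ c : ℂ, ‖c‖ = 1 ∧ f = c • g

theorem norm_inner_add_eq_norm_inner_sub_of_or {𝕜 H : Type*} [RCLike 𝕜] [NormedAddCommGroup H]
    [InnerProductSpace 𝕜 H] {u v w : H} (h : inner 𝕜 u w = 0 ∨ inner 𝕜 v w = 0) :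
    ‖inner 𝕜 (u + v) w‖ = ‖inner 𝕜 (u - v) w‖ := by
  rw [inner_add_left, inner_sub_left]
  rcases h with h | h <;> simp [h]

namespace DoesPhaseRetrieval

variable {H : Type*} [NormedAddCommGroup H] [InnerProductSpace ℂ H] {I : Type*} {x : I → H}

theorem exists_inner_ne_zero (hx : DoesPhaseRetrieval x) {u : H} (hu : u ≠ 0) :
    ∃ i, (inner ℂ u (x i) : ℂ) ≠ 0 := by
  by_contra! h
  obtain ⟨c, -, huc⟩ := hx u 0 (fun i => by simp [h i])
  exact hu (by simpa using huc)

theorem eq_zero_or_eq_zero_of_disjoint (hx : DoesPhaseRetrieval x) {u v : H}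
    (huv : ∀ i, (inner ℂ u (x i) : ℂ) = 0 ∨ (inner ℂ v (x i) : ℂ) = 0) : u = 0 ∨ v = 0 := by
  by_contra! h
  obtain ⟨i, hi⟩ := hx.exists_inner_ne_zero h.1
  obtain ⟨c, -, hc⟩ := hx (u + v) (u - v) fun j => norm_inner_add_eq_norm_inner_sub_of_or (huv j)
  have hvi : (inner ℂ v (x i) : ℂ) = 0 := (huv i).resolve_left hi
  have hc_one : c = 1 := by
    have hinner := congrArg (fun w => (inner ℂ w (x i) : ℂ)) hc
    simp only [inner_add_left, inner_sub_left, inner_smul_left, hvi, add_zero, sub_zero] at hinner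
    simpa using congrArg (starRingEnd ℂ) ((mul_eq_right₀ hi).mp hinner.symm)
  rw [hc_one, one_smul, sub_eq_add_neg, add_right_inj, eq_neg_iff_add_eq_zero, ← two_smul ℂ,
    smul_eq_zero] at hc
  exact h.2 (hc.resolve_left two_ne_zero)

end DoesPhaseRetrieval

theorem inner_map_apply_eq_inner_map_inv_mul {G : Type*} [Group G]
    {H : Type*} [NormedAddCommGroup H] [InnerProductSpace ℂ H]
    (π : G →* (H ≃ₗᵢ[ℂ] H)) (g x : G) (f η : H) :
    (inner ℂ (π g f) (π x η) : ℂ) = inner ℂ f (π (g⁻¹ * x) η) := by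
  conv_lhs => rw [← mul_inv_cancel_left g x, map_mul]
  exact LinearIsometryEquiv.inner_map_map (π g) f _

theorem support_mul_support_inv_eq_univ_general
    {G : Type*} [Group G]
    {H : Type*} [NormedAddCommGroup H] [InnerProductSpace ℂ H]
    (π : G →* (H ≃ₗᵢ[ℂ] H)) (η : H)
    (hη : DoesPhaseRetrieval (fun x : G => π x η))
    (f : H) (hf : f ≠ 0) :
    ∀ g : G, ∃ a b : G, (inner ℂ f (π a η) : ℂ) ≠ 0 ∧ (inner ℂ f (π b η) : ℂ) ≠ 0 ∧
      g = a * b⁻¹ := by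
  intro g
  by_contra! hg
  have hdisjoint : ∀ x : G,
      (inner ℂ f (π x η) : ℂ) = 0 ∨ (inner ℂ (π g f) (π x η) : ℂ) = 0 := fun x => by
    rw [inner_map_apply_eq_inner_map_inv_mul, or_iff_not_imp_left]
    exact fun hx => by_contra fun hgx => hg x (g⁻¹ * x) hx hgx (by group)
  rcases hη.eq_zero_or_eq_zero_of_disjoint hdisjoint with h | h
  · exact hf h
  · exact hf ((π g).map_eq_zero_iff.mp h)

/-- If `η` does phase retrieval for a unitary representation `π` of a finite group `G` on
a finite-dimensional complex Hilbert space, then for every nonzero `f` the support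
`A = {x : ⟨f, π(x)η⟩ ≠ 0}` satisfies `A ⬝ A⁻¹ = G`. -/
theorem support_mul_support_inv_eq_univ
    {G : Type*} [Group G] [Finite G]
    {H : Type*} [NormedAddCommGroup H] [InnerProductSpace ℂ H] [FiniteDimensional ℂ H]
    (π : G →* (H ≃ₗᵢ[ℂ] H)) (η : H)
    (hη : DoesPhaseRetrieval (fun x : G => π x η))
    (f : H) (hf : f ≠ 0) :
    ∀ g : G, ∃ a b : G, (inner ℂ f (π a η) : ℂ) ≠ 0 ∧ (inner ℂ f (π b η) : ℂ) ≠ 0 ∧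
      g = a * b⁻¹ :=
  support_mul_support_inv_eq_univ_general π η hη f hf
end

section
/- Let G be a finite group, let π be a unitary representation of G on a nontrivial finite-dimensional complex Hilbert space H, let K_π be the projective kernel of π, and suppose η ∈ H does phase retrieval for π. Then p₀(π,η) ≤ 1 − √(|K_π| / |G|), that is, p₀(π,η) ≤ 1 − |G/K_π|^{−1/2}. -/
/-- `p₀(π,η)`: the maximal proportion of zeros in the matrix coefficients
`V_η f = ⟨f, π(·)η⟩`, over all nonzero `f`. -/
noncomputable def p0Vec {G : Type*} [Group G] [Finite G]
    {H : Type*} [NormedAddCommGroup H] [InnerProductSpace ℂ H]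
    (π : G →* (H ≃ₗᵢ[ℂ] H)) (η : H) : ℝ :=
  sSup {t : ℝ | ∃ f : H, f ≠ 0 ∧
    t = 1 - (Nat.card {x : G | (inner ℂ f (π x η) : ℂ) ≠ 0} : ℝ) / (Nat.card G : ℝ)}

/-!
Let `A` be the support of `x ↦ ⟪f, π x η⟫` for some `f ≠ 0`. Replacing `f` by `π y f` translates
this support by `y`, and phase retrieval forbids two nonzero vectors whose coefficient functions
have disjoint supports; hence `A ∩ yA ≠ ∅` for every `y`, i.e. `A / A = G`. Moreover `A` is stable
under right multiplication by the projective kernel `K`, since `π k` only rescales `η`. The map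
`(y, k) ↦ (a_y k, b_y k)`, where `a_y / b_y = y`, injects `G × K` into `A × A`, so
`|G| |K| ≤ |A|²`, which is the claimed bound on the proportion `1 - |A| / |G|` of zeros.
-/

open scoped Pointwise InnerProductSpace

theorem Set.ncard_mul_ncard_le_sq_of_subset_div {G : Type*} [Group G] {S K A : Set G}
    (hA : A.Finite) (hAK : A * K ⊆ A) (hS : S ⊆ A / A) :
    S.ncard * K.ncard ≤ A.ncard ^ 2 := by
  have hdiv : ∀ y ∈ S, ∃ a ∈ A, ∃ b ∈ A, a / b = y := fun y hy => Set.mem_div.1 (hS hy)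
  choose! a ha b hb hab using hdiv
  rw [sq, ← Set.ncard_prod, ← Set.ncard_prod]
  refine Set.ncard_le_ncard_of_injOn (fun p : G × G => (a p.1 * p.2, b p.1 * p.2)) ?_ ?_
    (hA.prod hA)
  · rintro ⟨y, k⟩ ⟨hy, hk⟩
    exact ⟨hAK (Set.mul_mem_mul (ha y hy) hk), hAK (Set.mul_mem_mul (hb y hy) hk)⟩
  · rintro ⟨y, k⟩ ⟨hy, -⟩ ⟨y', k'⟩ ⟨hy', -⟩ h
    simp only [Prod.mk.injEq] at h
    obtain rfl : y = y' := by
      rw [← hab y hy, ← hab y' hy', ← mul_div_mul_right_eq_div (a y) (b y) k, h.1, h.2,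
        mul_div_mul_right_eq_div]
    rw [mul_left_cancel h.1]

namespace DoesPhaseRetrieval

variable {H : Type*} [NormedAddCommGroup H] [InnerProductSpace ℂ H] {I : Type*} {x : I → H}

theorem eq_zero_of_forall_inner_eq_zero (hx : DoesPhaseRetrieval x) {f : H}
    (hf : ∀ i, ⟪f, x i⟫_ℂ = 0) : f = 0 := by
  obtain ⟨c, -, rfl⟩ := hx f 0 fun i => by simp [hf i]
  exact smul_zero c

theorem eq_zero_or_eq_zero_of_disjoint_s14 (hx : DoesPhaseRetrieval x) {f g : H}
    (hfg : ∀ i, ⟪f, x i⟫_ℂ = 0 ∨ ⟪g, x i⟫_ℂ = 0) : f = 0 ∨ g = 0 := by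
  have hnorm : ∀ i, ‖⟪f + g, x i⟫_ℂ‖ = ‖⟪f - g, x i⟫_ℂ‖ := fun i => by
    rcases hfg i with h | h <;> simp [h]
  obtain ⟨c, -, hc⟩ := hx (f + g) (f - g) hnorm
  have hcomb : (c - 1) • f = (c + 1) • g := by linear_combination (norm := module) -hc
  by_cases hc1 : c = 1
  · subst hc1
    rw [sub_self, zero_smul, eq_comm, smul_eq_zero] at hcomb
    exact .inr (hcomb.resolve_left (by norm_num))
  · left
    have hf : f = ((c + 1) / (c - 1)) • g := by
      rw [div_eq_inv_mul, mul_smul, eq_inv_smul_iff₀ (sub_ne_zero.2 hc1), hcomb]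
    refine hx.eq_zero_of_forall_inner_eq_zero fun i => ?_
    rcases hfg i with h | h
    · exact h
    · rw [hf, inner_smul_left, h, mul_zero]

end DoesPhaseRetrieval

section Representation

variable {G : Type*} [Group G] {H : Type*} [NormedAddCommGroup H] [InnerProductSpace ℂ H]

def projKernel (π : G →* (H ≃ₗᵢ[ℂ] H)) : Set G :=
  {x | ∃ c : ℂ, ‖c‖ = 1 ∧ ∀ v : H, π x v = c • v}

def coeffSupport (π : G →* (H ≃ₗᵢ[ℂ] H)) (η f : H) : Set G :=
  {x | ⟪f, π x η⟫_ℂ ≠ 0}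

variable (π : G →* (H ≃ₗᵢ[ℂ] H)) (η : H)

theorem coeffSupport_mul_projKernel_subset (f : H) :
    coeffSupport π η f * projKernel π ⊆ coeffSupport π η f := by
  rintro _ ⟨x, hx, k, ⟨c, hc, hk⟩, rfl⟩
  have hc0 : c ≠ 0 := by rintro rfl; simp at hc
  simp only [coeffSupport, Set.mem_ofPred_eq, map_mul, LinearIsometryEquiv.coe_mul,
    Function.comp_apply, hk, map_smul, inner_smul_right] at hx ⊢
  exact mul_ne_zero hc0 hx

theorem inner_map_map_mul (y x : G) (f : H) : ⟪π y f, π (y * x) η⟫_ℂ = ⟪f, π x η⟫_ℂ := by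
  rw [map_mul]
  exact (π y).inner_map_map f (π x η)

variable {π η} in
theorem DoesPhaseRetrieval.coeffSupport_div_self_eq_univ
    (hη : DoesPhaseRetrieval fun x : G => π x η) {f : H} (hf : f ≠ 0) :
    coeffSupport π η f / coeffSupport π η f = Set.univ := by
  refine Set.eq_univ_of_forall fun y => by_contra fun hy => hf ?_
  have hdisj : ∀ x, ⟪f, π x η⟫_ℂ = 0 ∨ ⟪π y f, π x η⟫_ℂ = 0 := fun x => by
    rw [← mul_inv_cancel_left y x, inner_map_map_mul, mul_inv_cancel_left]
    by_contra! h
    exact hy (Set.mem_div.2 ⟨x, h.1, y⁻¹ * x, h.2, by simp [div_eq_mul_inv]⟩)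
  simpa using hη.eq_zero_or_eq_zero_of_disjoint_s14 hdisj

end Representation

theorem p0_le_of_phase_retrieval_general
    {G : Type*} [Group G] [Finite G]
    {H : Type*} [NormedAddCommGroup H] [InnerProductSpace ℂ H]
    (π : G →* (H ≃ₗᵢ[ℂ] H)) (η : H)
    (hη : DoesPhaseRetrieval (fun x : G => π x η)) :
    p0Vec π η ≤
      1 - Real.sqrt
        ((Nat.card {x : G | ∃ c : ℂ, ‖c‖ = 1 ∧ ∀ v : H, π x v = c • v} : ℝ) /
          (Nat.card G : ℝ)) := by
  change p0Vec π η ≤ 1 - √(((projKernel π).ncard : ℝ) / Nat.card G)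
  have hG : (0 : ℝ) < Nat.card G := mod_cast Nat.card_pos
  refine Real.sSup_le ?_ (sub_nonneg.2 (Real.sqrt_le_one.2 ?_))
  · rintro _ ⟨f, hf, rfl⟩
    have hcard : Nat.card G * (projKernel π).ncard ≤ (coeffSupport π η f).ncard ^ 2 := by
      rw [← Set.ncard_univ]
      exact Set.ncard_mul_ncard_le_sq_of_subset_div (Set.toFinite _)
        (coeffSupport_mul_projKernel_subset π η f) (hη.coeffSupport_div_self_eq_univ hf).ge
    have hsqrt : √((projKernel π).ncard / Nat.card G) ≤
        ((coeffSupport π η f).ncard : ℝ) / Nat.card G := by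
      rw [Real.sqrt_le_iff, div_pow, div_le_div_iff₀ hG (by positivity)]
      have : (Nat.card G : ℝ) * (projKernel π).ncard ≤ (coeffSupport π η f).ncard ^ 2 :=
        mod_cast hcard
      exact ⟨by positivity, by nlinarith⟩
    change 1 - ((coeffSupport π η f).ncard : ℝ) / Nat.card G ≤ _
    linarith
  · exact div_le_one_of_le₀ (mod_cast Set.ncard_le_card _) hG.le

/-- If `η` does phase retrieval for `π`, then `p₀(π,η) ≤ 1 - |G/K_π|^{-1/2}`, where
`K_π` is the projective kernel of `π`. -/
theorem p0_le_of_phase_retrieval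
    {G : Type*} [Group G] [Finite G]
    {H : Type*} [NormedAddCommGroup H] [InnerProductSpace ℂ H] [FiniteDimensional ℂ H]
    [Nontrivial H]
    (π : G →* (H ≃ₗᵢ[ℂ] H)) (η : H)
    (hη : DoesPhaseRetrieval (fun x : G => π x η)) :
    p0Vec π η ≤
      1 - Real.sqrt
        ((Nat.card {x : G | ∃ c : ℂ, ‖c‖ = 1 ∧ ∀ v : H, π x v = c • v} : ℝ) /
          (Nat.card G : ℝ)) :=
  p0_le_of_phase_retrieval_general π η hη
end
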